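/- (Herded kernel approximates the Gibbs kernel) For a fully connected graph with fixed scan order and irreducible corresponding Gibbs chain, let l, B be the constants from the linear visiting rate, and let T ≥ T* := 2B/l. Then the single-step herded Gibbs empirical conditional satisfies |P_{T,i}^{(τ)}(X_i = y_i | x_{−i}) − π(X_i = y_i | x_{−i})| ≤ 2/(lT) for all states x_{−i} in the support, and consequently the L1 induced norm of the per-variable kernel discrepancy satisfies ‖(T̃_{T,i}^{(τ)} − 𝒯_i)^T‖₁ ≤ 4/(lT). -/

import Mathlib

/-!
Fix the scanned variable `s` and a conditioning state `x₋ₛ`. The herding weights of `(x₋ₛ, true)`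
and `(x₋ₛ, false)` receive identical updates, so they differ by a constant `c` with `|c| < 1`.
Each visit of the class adds `p = π(Xₛ = true | x₋ₛ)` and each emitted `true` subtracts `1`, and
the weight of `(x₋ₛ, true)` never leaves the window `(p - 1 + min c 0, p + max c 0]`, of width
`1 + |c| ≤ 2`. Comparing the weight before and after the `T` sweeps gives
`|N_num - N_den · p| ≤ 2`. If both values of `Xₛ` have positive mass, the visiting rate gives
`N_den ≥ 2 (l T - B) ≥ l T`; if only one has, the chain stays in the support of `π`, so it always
emits that value and the empirical conditional is exact. A row of the kernel discrepancy has
only the two entries `y = (x₋ₛ, b)`.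
-/

open Finset

/-- Joint states of `N` binary variables. -/
abbrev GState (N : ℕ) := Fin N → Bool

/-- Full conditional probability π(Xᵢ = b | x₋ᵢ) for a target distribution π. -/
noncomputable def condProb {N : ℕ} (π : GState N → ℝ) (i : Fin N) (x : GState N)
    (b : Bool) : ℝ :=
  π (Function.update x i b) / (π (Function.update x i true) + π (Function.update x i false))

/-- Variable updated at step `t ≥ 1` of a fixed systematic scan (step kN + i with
1 ≤ i ≤ N updates the i-th variable, i.e. index i − 1). -/
def scanVar (N : ℕ) (hN : 0 < N) (t : ℕ) : Fin N := ⟨(t - 1) % N, Nat.mod_lt _ hN⟩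

/-- A herded Gibbs trajectory on a fully connected graph of `N` binary variables with
target `π`: one weight per variable `i` and per assignment of all the other variables
(weights are indexed by full states but only the off-`i` coordinates matter); at step
`t+1` the scanned variable emits 𝟙[w > 0] and only its active weight is updated. -/
structure HerdedGibbs (N : ℕ) (hN : 0 < N) (π : GState N → ℝ) where
  X : ℕ → GState N
  W : ℕ → Fin N → GState N → ℝ
  init_support : 0 < π (X 0)
  init_w : ∀ i x, condProb π i x true - 1 < W 0 i x ∧ W 0 i x ≤ condProb π i x true
  step_other : ∀ t j, j ≠ scanVar N hN (t + 1) → X (t + 1) j = X t j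
  step_cur : ∀ t, X (t + 1) (scanVar N hN (t + 1))
      = decide (0 < W t (scanVar N hN (t + 1)) (X t))
  w_active : ∀ t x, (∀ j, j ≠ scanVar N hN (t + 1) → x j = X t j) →
      W (t + 1) (scanVar N hN (t + 1)) x
        = W t (scanVar N hN (t + 1)) x + condProb π (scanVar N hN (t + 1)) x true
          - (if X (t + 1) (scanVar N hN (t + 1)) = true then 1 else 0)
  w_frozen : ∀ t i x, ¬(i = scanVar N hN (t + 1) ∧ ∀ j, j ≠ i → x j = X t j) →
      W (t + 1) i x = W t i x

/-- Transition matrix 𝒯ᵢ of regular Gibbs updating variable `i`. -/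
noncomputable def stepKernel {N : ℕ} (π : GState N → ℝ) (i : Fin N) :
    Matrix (GState N) (GState N) ℝ :=
  fun x y => if ∀ j, j ≠ i → x j = y j then condProb π i x (y i) else 0

/-- Full-sweep Gibbs transition kernel 𝒯 = 𝒯₁𝒯₂⋯𝒯_N. -/
noncomputable def sweepKernel {N : ℕ} (π : GState N → ℝ) :
    Matrix (GState N) (GState N) ℝ :=
  (List.ofFn fun i : Fin N => stepKernel π i).prod

/-- Total variation distance d_v(μ − ν) = ‖μ − ν‖₁ / 2 on a finite state space. -/
noncomputable def tvDist {α : Type*} [Fintype α] (μ ν : α → ℝ) : ℝ :=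
  (∑ x, |μ x - ν x|) / 2

/-- Dobrushin ergodic coefficient of a transition matrix. -/
noncomputable def dobrushin {α : Type*} [Fintype α] (K : Matrix α α ℝ) : ℝ :=
  ⨆ x, ⨆ x', tvDist (K x) (K x')

/-- Empirical distribution of `T` end-of-sweep samples starting at sweep `τ`. -/
noncomputable def empDist {N : ℕ} (X : ℕ → GState N) (τ T : ℕ) : GState N → ℝ :=
  fun x => (((Finset.Ico τ (τ + T)).filter fun k => X (k * N) = x).card : ℝ) / T

/-- N_num: number of occurrences of the joint state (x₋ᵢ, b) at substep `i` of sweeps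
τ, …, τ+T−1. -/
def empNum {N : ℕ} (hN : 0 < N) (X : ℕ → GState N) (τ T i : ℕ) (x : GState N)
    (b : Bool) : ℕ :=
  ((Finset.Ico τ (τ + T)).filter fun k =>
    (∀ j, j ≠ scanVar N hN i → X (k * N + i) j = x j)
      ∧ X (k * N + i) (scanVar N hN i) = b).card

/-- N_den: number of occurrences of the conditioning state x₋ᵢ at substep `i − 1`. -/
def empDen {N : ℕ} (hN : 0 < N) (X : ℕ → GState N) (τ T i : ℕ) (x : GState N) : ℕ :=
  ((Finset.Ico τ (τ + T)).filter fun k =>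
    ∀ j, j ≠ scanVar N hN i → X (k * N + i - 1) j = x j).card

/-- Empirical herded Gibbs single-step transition kernel T̃⁽ᵗ⁾_{T,i}; entries with an
unvisited conditioning state are set to the regular Gibbs kernel. -/
noncomputable def empStepKernel {N : ℕ} (hN : 0 < N) (π : GState N → ℝ)
    (X : ℕ → GState N) (τ T i : ℕ) : Matrix (GState N) (GState N) ℝ :=
  fun x y => if ∀ j, j ≠ scanVar N hN i → x j = y j then
      (if empDen hN X τ T i x = 0 then condProb π (scanVar N hN i) x (y (scanVar N hN i))
       else (empNum hN X τ T i x (y (scanVar N hN i)) : ℝ) / (empDen hN X τ T i x : ℝ))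
    else 0

/-- Empirical full-sweep herded Gibbs kernel T̃⁽ᵗ⁾_T = T̃⁽ᵗ⁾_{T,1}⋯T̃⁽ᵗ⁾_{T,N}. -/
noncomputable def empSweepKernel {N : ℕ} (hN : 0 < N) (π : GState N → ℝ)
    (X : ℕ → GState N) (τ T : ℕ) : Matrix (GState N) (GState N) ℝ :=
  (List.ofFn fun i : Fin N => empStepKernel hN π X τ T (i + 1)).prod

open Function

section CondProb

variable {N : ℕ} {π : GState N → ℝ}

theorem condProb_update_self (j : Fin N) (x : GState N) (b b' : Bool) :
    condProb π j (update x j b) b' = condProb π j x b' := by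
  simp [condProb]

theorem condProb_nonneg (hπ0 : ∀ x, 0 ≤ π x) (j : Fin N) (x : GState N) (b : Bool) :
    0 ≤ condProb π j x b :=
  div_nonneg (hπ0 _) (add_nonneg (hπ0 _) (hπ0 _))

theorem condProb_le_one (hπ0 : ∀ x, 0 ≤ π x) (j : Fin N) (x : GState N) (b : Bool) :
    condProb π j x b ≤ 1 := by
  apply div_le_one_of_le₀ _ (add_nonneg (hπ0 _) (hπ0 _))
  cases b
  · exact le_add_of_nonneg_left (hπ0 _)
  · exact le_add_of_nonneg_right (hπ0 _)

theorem condProb_eq_zero {j : Fin N} {x : GState N} {b : Bool} (h : π (update x j b) = 0) :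
    condProb π j x b = 0 := by
  rw [condProb, h, zero_div]

theorem condProb_true_add_false {j : Fin N} {x : GState N}
    (hx : 0 < π (update x j true) + π (update x j false)) :
    condProb π j x true + condProb π j x false = 1 := by
  rw [condProb, condProb, ← add_div, div_self hx.ne']

end CondProb

theorem sum_eq_sum_update_of_eq_zero {ι β M : Type*} [Fintype ι] [DecidableEq ι] [Fintype β]
    [DecidableEq β] [AddCommMonoid M] {f : (ι → β) → M} (x : ι → β) (i : ι)
    (hf : ∀ y, ¬(∀ j, j ≠ i → x j = y j) → f y = 0) :
    ∑ y, f y = ∑ b, f (update x i b) := by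
  rw [← Finset.sum_image (fun b _ b' _ h => update_injective x i h)]
  refine (Finset.sum_subset (Finset.subset_univ _) fun y _ hy => hf y fun hxy => hy ?_).symm
  exact Finset.mem_image.mpr ⟨y i, Finset.mem_univ _,
    (eq_update_iff.mpr ⟨rfl, fun j hj => (hxy j hj).symm⟩).symm⟩

theorem herding_window_step {p c u d : ℝ} (hp0 : 0 ≤ p) (hp1 : p ≤ 1) (hd : d = u ∨ d = u - c)
    (hu : p - 1 + min c 0 < u ∧ u ≤ p + max c 0) :
    p - 1 + min c 0 < u + (p - if 0 < d then 1 else 0)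
      ∧ u + (p - if 0 < d then 1 else 0) ≤ p + max c 0 := by
  have := min_le_left c 0; have := min_le_right c 0
  have := le_max_left c 0; have := le_max_right c 0
  split_ifs with hpos <;> rcases hd with rfl | rfl <;> constructor <;> linarith

section Scan

variable {N : ℕ} {hN : 0 < N}

theorem scanVar_mul_add_succ (k : ℕ) (s : Fin N) : scanVar N hN (k * N + s + 1) = s := by
  ext
  simp [scanVar, Nat.mul_add_mod_of_lt s.isLt]

theorem scanVar_succ (s : Fin N) : scanVar N hN (s + 1) = s := by
  simpa using scanVar_mul_add_succ (hN := hN) 0 s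

theorem empNum_succ_eq (X : ℕ → GState N) (τ T : ℕ) (s : Fin N) (x : GState N) (b : Bool) :
    empNum hN X τ T (s + 1) x b
      = ((Finset.Ico τ (τ + T)).filter fun k => X (k * N + s + 1) = update x s b).card := by
  simp only [empNum, scanVar_succ, eq_update_iff, and_comm, add_assoc]

theorem empDen_succ_eq (X : ℕ → GState N) (τ T : ℕ) (s : Fin N) (x : GState N) :
    empDen hN X τ T (s + 1) x
      = ((Finset.Ico τ (τ + T)).filter fun k => ∀ j, j ≠ s → X (k * N + s) j = x j).card := by
  simp only [empDen, scanVar_succ, ← add_assoc, Nat.add_sub_cancel]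

end Scan

section Kernels

variable {N : ℕ} {hN : 0 < N} {π : GState N → ℝ}

theorem stepKernel_update (s : Fin N) (x : GState N) (b : Bool) :
    stepKernel π s x (update x s b) = condProb π s x b := by
  simp +contextual [stepKernel]

theorem empStepKernel_update (X : ℕ → GState N) (τ T : ℕ) (s : Fin N) (x : GState N) (b : Bool) :
    empStepKernel hN π X τ T (s + 1) x (update x s b)
      = if empDen hN X τ T (s + 1) x = 0 then condProb π s x b
        else (empNum hN X τ T (s + 1) x b : ℝ) / empDen hN X τ T (s + 1) x := by
  simp +contextual [empStepKernel, scanVar_succ]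

end Kernels

namespace HerdedGibbs

variable {N : ℕ} {hN : 0 < N} {π : GState N → ℝ} (hg : HerdedGibbs N hN π)

theorem X_succ_eq_update_iff (t : ℕ) (x : GState N) (b : Bool) :
    hg.X (t + 1) = update x (scanVar N hN (t + 1)) b
      ↔ (∀ j, j ≠ scanVar N hN (t + 1) → hg.X t j = x j)
        ∧ hg.X (t + 1) (scanVar N hN (t + 1)) = b := by
  rw [eq_update_iff, and_comm]
  exact and_congr_left' (forall₂_congr fun j hj => by rw [hg.step_other t j hj])

theorem W_succ (t : ℕ) (j : Fin N) (y : GState N) :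
    hg.W (t + 1) j y = hg.W t j y
      + if j = scanVar N hN (t + 1) ∧ ∀ j', j' ≠ j → hg.X t j' = y j' then
          condProb π j y true - (if hg.X (t + 1) j then 1 else 0)
        else 0 := by
  by_cases h : j = scanVar N hN (t + 1) ∧ ∀ j', j' ≠ j → hg.X t j' = y j'
  · obtain ⟨rfl, hy⟩ := h
    rw [if_pos ⟨rfl, hy⟩, hg.w_active t y fun j' hj' => (hy j' hj').symm]
    ring
  · rw [if_neg h, hg.w_frozen t j y fun h' => h ⟨h'.1, fun j' hj' => (h'.2 j' hj').symm⟩,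
      add_zero]

theorem W_succ_update (t : ℕ) (s : Fin N) (x : GState N) (b : Bool) :
    hg.W (t + 1) s (update x s b) = hg.W t s (update x s b)
      + if s = scanVar N hN (t + 1) ∧ ∀ j, j ≠ s → hg.X t j = x j then
          condProb π s x true - (if hg.X (t + 1) s then 1 else 0)
        else 0 := by
  simp +contextual only [W_succ, condProb_update_self, ne_eq, not_false_eq_true, update_of_ne]

theorem decide_pos_W_of_condProb_eq (t : ℕ) {j : Fin N} {y : GState N} {b : Bool}
    (hp : condProb π j y true = if b then 1 else 0) : decide (0 < hg.W t j y) = b := by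
  induction t generalizing y with
  | zero =>
    have := hg.init_w j y
    cases b
    · simpa [hp] using this.2
    · simpa [hp] using this.1
  | succ t ih =>
    rw [W_succ]
    by_cases h : j = scanVar N hN (t + 1) ∧ ∀ j', j' ≠ j → hg.X t j' = y j'
    · obtain ⟨rfl, hy⟩ := h
      have hX : hg.X t = update y (scanVar N hN (t + 1)) (hg.X t (scanVar N hN (t + 1))) :=
        eq_update_iff.mpr ⟨rfl, hy⟩
      have hemit : hg.X (t + 1) (scanVar N hN (t + 1)) = b := by
        rw [hg.step_cur t, hX]
        exact ih (by rw [condProb_update_self, hp])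
      rw [if_pos ⟨rfl, hy⟩, hemit, hp, sub_self, add_zero]
      exact ih hp
    · rw [if_neg h, add_zero]
      exact ih hp

theorem X_pos (hπ0 : ∀ x, 0 ≤ π x) (t : ℕ) : 0 < π (hg.X t) := by
  induction t with
  | zero => exact hg.init_support
  | succ t ih =>
    set s := scanVar N hN (t + 1)
    obtain ⟨b, hb⟩ : ∃ b, hg.X (t + 1) s = b := ⟨_, rfl⟩
    have hX : hg.X (t + 1) = update (hg.X t) s b :=
      (hg.X_succ_eq_update_iff t _ _).mpr ⟨fun _ _ => rfl, hb⟩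
    rw [hX]
    refine (hπ0 _).lt_of_ne' fun hzero => ?_
    have hXs : hg.X t s = !b := by
      by_contra hne
      rw [Bool.eq_not, not_not] at hne
      rw [← hne, update_eq_self] at hzero
      exact ih.ne' hzero
    have hp : condProb π s (hg.X t) true = if !b then 1 else 0 := by
      cases b
      · have hpos : 0 < π (update (hg.X t) s true) := by
          rwa [← Bool.not_false, ← hXs, update_eq_self]
        simp only [Bool.not_false, if_true, condProb, hzero, add_zero]
        exact div_self hpos.ne'
      · exact condProb_eq_zero hzero
    have hemit := hg.decide_pos_W_of_condProb_eq t hp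
    rw [← hg.step_cur t, hb] at hemit
    exact Bool.not_ne_self b hemit.symm

def offset (s : Fin N) (x : GState N) : ℝ :=
  hg.W 0 s (update x s true) - hg.W 0 s (update x s false)

theorem abs_offset_lt_one (s : Fin N) (x : GState N) : |hg.offset s x| < 1 := by
  have htrue := hg.init_w s (update x s true)
  have hfalse := hg.init_w s (update x s false)
  rw [condProb_update_self] at htrue hfalse
  rw [offset, abs_sub_lt_iff]
  constructor <;> linarith

theorem W_update_sub (t : ℕ) (s : Fin N) (x : GState N) :
    hg.W t s (update x s true) - hg.W t s (update x s false) = hg.offset s x := by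
  induction t with
  | zero => rfl
  | succ t ih => rw [W_succ_update, W_succ_update, ← ih]; ring

theorem W_mem_window (hπ0 : ∀ x, 0 ≤ π x) (t : ℕ) (s : Fin N) (x : GState N) :
    condProb π s x true - 1 + min (hg.offset s x) 0 < hg.W t s (update x s true)
      ∧ hg.W t s (update x s true) ≤ condProb π s x true + max (hg.offset s x) 0 := by
  induction t with
  | zero =>
    have := hg.init_w s (update x s true)
    rw [condProb_update_self] at this
    constructor <;> linarith [min_le_right (hg.offset s x) 0, le_max_right (hg.offset s x) 0]
  | succ t ih =>
    rw [W_succ_update]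
    by_cases h : s = scanVar N hN (t + 1) ∧ ∀ j, j ≠ s → hg.X t j = x j
    · obtain ⟨hs, hx⟩ := h
      have hX : hg.X t = update x s (hg.X t s) := eq_update_iff.mpr ⟨rfl, hx⟩
      have hemit : hg.X (t + 1) s = decide (0 < hg.W t s (hg.X t)) := by
        rw [hs]
        exact hg.step_cur t
      have hd : hg.W t s (hg.X t) = hg.W t s (update x s true)
          ∨ hg.W t s (hg.X t) = hg.W t s (update x s true) - hg.offset s x := by
        rw [← hg.W_update_sub t, hX]
        cases hg.X t s <;> simp
      rw [if_pos ⟨hs, hx⟩, hemit]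
      simp only [decide_eq_true_iff]
      exact herding_window_step (condProb_nonneg hπ0 s x true) (condProb_le_one hπ0 s x true) hd ih
    · rwa [if_neg h, add_zero]

theorem W_sweep (k : ℕ) (s : Fin N) (x : GState N) :
    hg.W ((k + 1) * N) s (update x s true) = hg.W (k * N) s (update x s true)
      + if ∀ j, j ≠ s → hg.X (k * N + s) j = x j then
          condProb π s x true - (if hg.X (k * N + s + 1) s then 1 else 0)
        else 0 := by
  have htel : ∑ r : Fin N, (hg.W (k * N + r + 1) s (update x s true)
        - hg.W (k * N + r) s (update x s true))
      = hg.W ((k + 1) * N) s (update x s true) - hg.W (k * N) s (update x s true) :=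
    (Fin.sum_univ_eq_sum_range (fun r => hg.W (k * N + r + 1) s (update x s true)
        - hg.W (k * N + r) s (update x s true)) N).trans
      ((Finset.sum_range_sub (fun r => hg.W (k * N + r) s (update x s true)) N).trans
        (by rw [add_one_mul, add_zero]))
  rw [Finset.sum_eq_single s, W_succ_update, scanVar_mul_add_succ] at htel
  · simp only [true_and, add_sub_cancel_left] at htel
    linarith
  · intro r _ hr
    rw [W_succ_update, scanVar_mul_add_succ, if_neg fun h => hr h.1.symm]
    ring
  · simp

theorem W_sweeps (τ T : ℕ) (s : Fin N) (x : GState N) :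
    hg.W ((τ + T) * N) s (update x s true) = hg.W (τ * N) s (update x s true)
      + ∑ k ∈ Finset.Ico τ (τ + T), if ∀ j, j ≠ s → hg.X (k * N + s) j = x j then
          condProb π s x true - (if hg.X (k * N + s + 1) s then 1 else 0)
        else 0 := by
  induction T with
  | zero => simp
  | succ T ih =>
    rw [← add_assoc, W_sweep, ih, Finset.sum_Ico_succ_top (by omega)]
    ring

theorem X_mul_add_succ_eq_update_iff (k : ℕ) (s : Fin N) (x : GState N) (b : Bool) :
    hg.X (k * N + s + 1) = update x s b
      ↔ (∀ j, j ≠ s → hg.X (k * N + s) j = x j) ∧ hg.X (k * N + s + 1) s = b := by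
  simpa only [scanVar_mul_add_succ] using hg.X_succ_eq_update_iff (k * N + s) x b

theorem sum_sweep_gain_eq (τ T : ℕ) (s : Fin N) (x : GState N) :
    ∑ k ∈ Finset.Ico τ (τ + T), (if ∀ j, j ≠ s → hg.X (k * N + s) j = x j then
          condProb π s x true - (if hg.X (k * N + s + 1) s then 1 else 0) else 0)
      = empDen hN hg.X τ T (s + 1) x * condProb π s x true
        - empNum hN hg.X τ T (s + 1) x true := by
  simp only [empDen_succ_eq, empNum_succ_eq, Finset.natCast_card_filter, Finset.sum_mul,
    ← Finset.sum_sub_distrib, X_mul_add_succ_eq_update_iff]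
  refine Finset.sum_congr rfl fun k _ => ?_
  split_ifs <;> simp_all

theorem empNum_true_add_false (τ T : ℕ) (s : Fin N) (x : GState N) :
    empNum hN hg.X τ T (s + 1) x true + empNum hN hg.X τ T (s + 1) x false
      = empDen hN hg.X τ T (s + 1) x := by
  simp only [empNum_succ_eq, empDen_succ_eq, X_mul_add_succ_eq_update_iff, ← Finset.filter_filter,
    ← Bool.not_eq_true]
  exact Finset.card_filter_add_card_filter_not _

theorem empNum_le_empDen (τ T : ℕ) (s : Fin N) (x : GState N) (b : Bool) :
    empNum hN hg.X τ T (s + 1) x b ≤ empDen hN hg.X τ T (s + 1) x := by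
  have := hg.empNum_true_add_false τ T s x
  cases b <;> omega

theorem abs_empNum_sub_le_two (hπ0 : ∀ x, 0 ≤ π x) (τ T : ℕ) (s : Fin N) (x : GState N) :
    |(empNum hN hg.X τ T (s + 1) x true : ℝ)
        - empDen hN hg.X τ T (s + 1) x * condProb π s x true| ≤ 2 := by
  have hsweeps := hg.W_sweeps τ T s x
  rw [sum_sweep_gain_eq] at hsweeps
  have hstart := hg.W_mem_window hπ0 (τ * N) s x
  have hend := hg.W_mem_window hπ0 ((τ + T) * N) s x
  have hwidth : max (hg.offset s x) 0 - min (hg.offset s x) 0 ≤ 1 := by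
    rw [max_sub_min_eq_abs', sub_zero]
    exact (hg.abs_offset_lt_one s x).le
  rw [abs_le]
  constructor <;> linarith

theorem abs_empNum_sub_eq (τ T : ℕ) {s : Fin N} {x : GState N}
    (hx : 0 < π (update x s true) + π (update x s false)) (b : Bool) :
    |(empNum hN hg.X τ T (s + 1) x b : ℝ) - empDen hN hg.X τ T (s + 1) x * condProb π s x b|
      = |(empNum hN hg.X τ T (s + 1) x true : ℝ)
          - empDen hN hg.X τ T (s + 1) x * condProb π s x true| := by
  cases b
  · have hnum : (empNum hN hg.X τ T (s + 1) x true : ℝ) + empNum hN hg.X τ T (s + 1) x false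
        = empDen hN hg.X τ T (s + 1) x := by exact_mod_cast hg.empNum_true_add_false τ T s x
    have hp := condProb_true_add_false hx
    rw [← abs_neg]
    congr 1
    linear_combination -hnum + (empDen hN hg.X τ T (s + 1) x : ℝ) * hp
  · rfl

theorem empNum_eq_zero (hπ0 : ∀ x, 0 ≤ π x) (τ T : ℕ) {s : Fin N} {x : GState N} {b : Bool}
    (h : π (update x s b) = 0) : empNum hN hg.X τ T (s + 1) x b = 0 := by
  rw [empNum_succ_eq, Finset.card_eq_zero, Finset.filter_eq_empty_iff]
  intro k _ hk
  have := hg.X_pos hπ0 (k * N + s + 1)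
  rw [hk, h] at this
  exact this.false

theorem abs_empNum_div_empDen_sub_condProb_le (hπ0 : ∀ x, 0 ≤ π x) {τ T : ℕ} {s : Fin N}
    {x : GState N} {l B : ℝ} (hB : 0 < B) (hlT : 2 * B ≤ l * T)
    (hrate : ∀ b, 0 < π (update x s b) → l * T - B ≤ empNum hN hg.X τ T (s + 1) x b)
    (hx : 0 < π (update x s true) + π (update x s false)) (b : Bool) :
    |(empNum hN hg.X τ T (s + 1) x b : ℝ) / empDen hN hg.X τ T (s + 1) x - condProb π s x b|
      ≤ 2 / (l * T) := by
  by_cases hdeg : ∃ b', π (update x s b') = 0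
  · obtain ⟨b', hb'⟩ := hdeg
    have hpos : 0 < π (update x s (!b')) := by cases b' <;> simp_all
    have hden : (0 : ℝ) < empDen hN hg.X τ T (s + 1) x := by
      have hle : (empNum hN hg.X τ T (s + 1) x (!b') : ℝ) ≤ empDen hN hg.X τ T (s + 1) x := by
        exact_mod_cast hg.empNum_le_empDen τ T s x (!b')
      linarith [hrate (!b') hpos]
    have herr : |(empNum hN hg.X τ T (s + 1) x b : ℝ)
        - empDen hN hg.X τ T (s + 1) x * condProb π s x b| = 0 := by
      rw [hg.abs_empNum_sub_eq τ T hx, ← hg.abs_empNum_sub_eq τ T hx b',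
        hg.empNum_eq_zero hπ0 τ T hb', condProb_eq_zero hb']
      simp
    rw [div_sub' hden.ne', abs_div, abs_of_pos hden, herr, zero_div]
    have : 0 < l * T := by linarith
    positivity
  · push Not at hdeg
    have hpos (b' : Bool) : 0 < π (update x s b') := (hπ0 _).lt_of_ne' (hdeg b')
    have hsplit : (empNum hN hg.X τ T (s + 1) x true : ℝ) + empNum hN hg.X τ T (s + 1) x false
        = empDen hN hg.X τ T (s + 1) x := by exact_mod_cast hg.empNum_true_add_false τ T s x
    have hden : l * T ≤ empDen hN hg.X τ T (s + 1) x := by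
      linarith [hrate true (hpos true), hrate false (hpos false)]
    have hden0 : (0 : ℝ) < empDen hN hg.X τ T (s + 1) x := by linarith
    calc |(empNum hN hg.X τ T (s + 1) x b : ℝ) / empDen hN hg.X τ T (s + 1) x - condProb π s x b|
        = |(empNum hN hg.X τ T (s + 1) x b : ℝ)
            - empDen hN hg.X τ T (s + 1) x * condProb π s x b| / empDen hN hg.X τ T (s + 1) x := by
          rw [div_sub' hden0.ne', abs_div, abs_of_pos hden0]
      _ ≤ 2 / empDen hN hg.X τ T (s + 1) x := by
          gcongr
          rw [hg.abs_empNum_sub_eq τ T hx]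
          exact hg.abs_empNum_sub_le_two hπ0 τ T s x
      _ ≤ 2 / (l * T) := by gcongr; linarith

theorem pos_of_empDen_ne_zero (hπ0 : ∀ x, 0 ≤ π x) {τ T : ℕ} {s : Fin N} {x : GState N}
    (h : empDen hN hg.X τ T (s + 1) x ≠ 0) : 0 < π (update x s true) + π (update x s false) := by
  rw [empDen_succ_eq] at h
  obtain ⟨k, hk⟩ := Finset.card_pos.mp (Nat.pos_of_ne_zero h)
  have hX : hg.X (k * N + s) = update x s (hg.X (k * N + s) s) :=
    eq_update_iff.mpr ⟨rfl, (Finset.mem_filter.mp hk).2⟩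
  have hpos := hg.X_pos hπ0 (k * N + s)
  rw [hX] at hpos
  generalize hg.X (k * N + s) s = b at hpos
  cases b
  · exact add_pos_of_nonneg_of_pos (hπ0 _) hpos
  · exact add_pos_of_pos_of_nonneg hpos (hπ0 _)

theorem sum_abs_empStepKernel_sub_stepKernel_le (hπ0 : ∀ x, 0 ≤ π x) (τ T : ℕ) (s : Fin N)
    (x : GState N) {ε : ℝ} (hε : 0 ≤ ε)
    (herr : 0 < π (update x s true) + π (update x s false) → ∀ b : Bool,
      |(empNum hN hg.X τ T (s + 1) x b : ℝ) / empDen hN hg.X τ T (s + 1) x - condProb π s x b|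
        ≤ ε) :
    ∑ y, |empStepKernel hN π hg.X τ T (s + 1) x y - stepKernel π s x y| ≤ 2 * ε := by
  rw [sum_eq_sum_update_of_eq_zero x s fun y hy => by
    simp [empStepKernel, stepKernel, scanVar_succ, hy], Fintype.sum_bool]
  simp only [empStepKernel_update, stepKernel_update]
  by_cases hden : empDen hN hg.X τ T (s + 1) x = 0
  · simp only [hden, if_true, sub_self, abs_zero]
    linarith
  · have hb := herr (hg.pos_of_empDen_ne_zero hπ0 hden)
    simp only [hden, if_false]
    linarith [hb true, hb false]

end HerdedGibbs

theorem herded_gibbs_kernel_approximation_general {N : ℕ} (hN : 0 < N)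
    (π : GState N → ℝ) (hπ0 : ∀ x, 0 ≤ π x)
    (hg : HerdedGibbs N hN π)
    (l B : ℝ) (hl : 0 < l) (hB : 0 < B)
    (hrate : ∀ i : ℕ, 1 ≤ i → i ≤ N → ∀ x : GState N, 0 < π x → ∀ T s : ℕ,
      l * (T : ℝ) - B
        ≤ (((Finset.Ico s (s + T)).filter fun k => hg.X (k * N + i) = x).card : ℝ))
    (i : ℕ) (hi1 : 1 ≤ i) (hi2 : i ≤ N)
    (τ T : ℕ) (hT : 2 * B / l ≤ (T : ℝ)) :
    (∀ x : GState N,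
        0 < π (Function.update x (scanVar N hN i) true)
              + π (Function.update x (scanVar N hN i) false) →
        ∀ b : Bool,
          |(empNum hN hg.X τ T i x b : ℝ) / (empDen hN hg.X τ T i x : ℝ)
              - condProb π (scanVar N hN i) x b| ≤ 2 / (l * T)) ∧
    (∀ x : GState N,
        ∑ y, |empStepKernel hN π hg.X τ T i x y - stepKernel π (scanVar N hN i) x y|
          ≤ 4 / (l * T)) := by
  obtain ⟨s, rfl⟩ : ∃ s : Fin N, i = s + 1 := ⟨⟨i - 1, by omega⟩, by simp only; omega⟩
  rw [scanVar_succ]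
  have hlT : 2 * B ≤ l * T := by rw [div_le_iff₀ hl] at hT; linarith
  have hcond (x : GState N) := hg.abs_empNum_div_empDen_sub_condProb_le hπ0 hB hlT
    fun b hb => (empNum_succ_eq hg.X τ T s x b).symm ▸ hrate _ hi1 hi2 _ hb T τ
  refine ⟨hcond, fun x => ?_⟩
  exact (hg.sum_abs_empStepKernel_sub_stepKernel_le hπ0 τ T s x
    (div_nonneg zero_le_two (by linarith)) (hcond x)).trans_eq (by ring)

/-- Herded kernel approximates the Gibbs kernel: with the linear visiting
rate constants l, B and T ≥ T* := 2B/l, the empirical single-step conditional of herded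
Gibbs matches the true conditional within 2/(lT) on the support, and the per-variable
kernel discrepancy has L1 induced norm (max row sum) at most 4/(lT). -/
theorem herded_gibbs_kernel_approximation {N : ℕ} (hN : 0 < N)
    (π : GState N → ℝ) (hπ0 : ∀ x, 0 ≤ π x) (hπ1 : ∑ x, π x = 1)
    (hg : HerdedGibbs N hN π)
    (l B : ℝ) (hl : 0 < l) (hB : 0 < B)
    (hrate : ∀ i : ℕ, 1 ≤ i → i ≤ N → ∀ x : GState N, 0 < π x → ∀ T s : ℕ,
      l * (T : ℝ) - B
        ≤ (((Finset.Ico s (s + T)).filter fun k => hg.X (k * N + i) = x).card : ℝ))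
    (i : ℕ) (hi1 : 1 ≤ i) (hi2 : i ≤ N)
    (τ T : ℕ) (hT : 2 * B / l ≤ (T : ℝ)) :
    (∀ x : GState N,
        0 < π (Function.update x (scanVar N hN i) true)
              + π (Function.update x (scanVar N hN i) false) →
        ∀ b : Bool,
          |(empNum hN hg.X τ T i x b : ℝ) / (empDen hN hg.X τ T i x : ℝ)
              - condProb π (scanVar N hN i) x b| ≤ 2 / (l * T)) ∧
    (∀ x : GState N,
        ∑ y, |empStepKernel hN π hg.X τ T i x y - stepKernel π (scanVar N hN i) x y|
          ≤ 4 / (l * T)) :=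
  herded_gibbs_kernel_approximation_general hN π hπ0 hg l B hl hB hrate i hi1 hi2 τ T hT
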